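/- For every integer k ≥ 0, let T_v be the rooted tree whose root v has three children, each of which is the root of a copy of H(k); then the graph T_v² ∖ {v}, obtained from the square of T_v by deleting v, has linear MIM-width at least 2k + 1. -/

import Mathlib

open scoped Classical

noncomputable section

namespace LMW

variable {V : Type*} [Fintype V]

/-- The bipartite graph `G[Vᵢ, V̄ᵢ]` consisting of the edges of `G` crossing the cut at
position `i` of the linear layout `σ` (here `Vᵢ` is the set of the first `i` vertices
in the layout). -/
def cutGraph (G : SimpleGraph V) (σ : V ≃ Fin (Fintype.card V)) (i : ℕ) : SimpleGraph V where
  Adj u v := G.Adj u v ∧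
    (((σ u : ℕ) < i ∧ i ≤ (σ v : ℕ)) ∨ ((σ v : ℕ) < i ∧ i ≤ (σ u : ℕ)))
  symm := by
    constructor
    intro u v h
    exact ⟨h.1.symm, h.2.symm⟩
  loopless := by
    constructor
    intro u h
    exact G.loopless.irrefl u h.1

/-- `M` is an induced matching in `H`: a set of edges of `H` such that any two distinct
edges of `M` share no endpoint and no endpoint of one is adjacent in `H` to an endpoint
of the other. -/
def IsInducedMatching (H : SimpleGraph V) (M : Finset (Sym2 V)) : Prop :=
  (↑M : Set (Sym2 V)) ⊆ H.edgeSet ∧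
    ∀ e ∈ M, ∀ f ∈ M, e ≠ f → ∀ u ∈ e, ∀ v ∈ f, u ≠ v ∧ ¬ H.Adj u v

/-- `mim H` is the size of a maximum induced matching of `H`. -/
def mim (H : SimpleGraph V) : ℕ :=
  sSup {n : ℕ | ∃ M : Finset (Sym2 V), IsInducedMatching H M ∧ M.card = n}

/-- The MIM-width of `G` under the linear layout `σ`: the maximum over all cuts
`1 ≤ i < |V|` of the size of a maximum induced matching of the cut graph. -/
def mw (G : SimpleGraph V) (σ : V ≃ Fin (Fintype.card V)) : ℕ :=
  (Finset.Ico 1 (Fintype.card V)).sup fun i => mim (cutGraph G σ i)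

/-- The linear MIM-width of `G`: the minimum of `mw G σ` over all linear layouts `σ`. -/
def lmw (G : SimpleGraph V) : ℕ :=
  sInf {m : ℕ | ∃ σ : V ≃ Fin (Fintype.card V), mw G σ = m}

/-- The `m`-th power of a graph: two distinct vertices are adjacent iff their distance
in `G` is at most `m`. -/
def graphPow (G : SimpleGraph V) (m : ℕ) : SimpleGraph V where
  Adj u v := u ≠ v ∧ G.edist u v ≤ m
  symm := by
    constructor
    intro u v h
    refine ⟨h.1.symm, ?_⟩
    rw [SimpleGraph.edist_comm]
    exact h.2
  loopless := by
    constructor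
    intro u h
    exact h.1 rfl

/-- Vertex type of the tree `H k`:  `H 0` is a single vertex; `H (k+1)` consists of a root
`u = Sum.inl ()`, three children `vᵢ = Sum.inr (i, Sum.inl ())` and, below each `vᵢ`, three
copies of `H k`, the `j`-th copy having vertices `Sum.inr (i, Sum.inr (j, a))`. -/
def HV : ℕ → Type
  | 0 => Unit
  | k + 1 => Unit ⊕ (Fin 3 × (Unit ⊕ (Fin 3 × HV k)))

instance instDecEqHV : ∀ k, DecidableEq (HV k)
  | 0 => inferInstanceAs (DecidableEq Unit)
  | k + 1 =>
    letI := instDecEqHV k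
    inferInstanceAs (DecidableEq (Unit ⊕ (Fin 3 × (Unit ⊕ (Fin 3 × HV k)))))

instance instFintypeHV : ∀ k, Fintype (HV k)
  | 0 => inferInstanceAs (Fintype Unit)
  | k + 1 =>
    letI := instFintypeHV k
    inferInstanceAs (Fintype (Unit ⊕ (Fin 3 × (Unit ⊕ (Fin 3 × HV k)))))

/-- The root of `H k`. -/
def Hroot : ∀ k, HV k
  | 0 => ()
  | _ + 1 => Sum.inl ()

/-- The tree `H k`: the root `u` is adjacent to the three children `vᵢ`, each child `vᵢ` is
adjacent to the roots of its three copies of `H k`, and within each copy the edges are those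
of `H k`. -/
def Hgraph : ∀ k, SimpleGraph (HV k)
  | 0 => ⊥
  | k + 1 => SimpleGraph.fromRel (fun x y : HV (k + 1) =>
      (∃ i : Fin 3, x = Sum.inl () ∧ y = Sum.inr (i, Sum.inl ())) ∨
      (∃ (i j : Fin 3), x = Sum.inr (i, Sum.inl ()) ∧ y = Sum.inr (i, Sum.inr (j, Hroot k))) ∨
      (∃ (i j : Fin 3) (a b : HV k), x = Sum.inr (i, Sum.inr (j, a)) ∧
        y = Sum.inr (i, Sum.inr (j, b)) ∧ (Hgraph k).Adj a b))

/-- The rooted tree `T_v` whose root `v = Sum.inl ()` has three children, each of which is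
the root of a copy of `H k`; the vertices of the `i`-th copy are `Sum.inr (i, a)`. -/
def TvGraph (k : ℕ) : SimpleGraph (Unit ⊕ (Fin 3 × HV k)) :=
  SimpleGraph.fromRel (fun x y =>
    (∃ i : Fin 3, x = Sum.inl () ∧ y = Sum.inr (i, Hroot k)) ∨
    (∃ (i : Fin 3) (a b : HV k), x = Sum.inr (i, a) ∧ y = Sum.inr (i, b) ∧
      (Hgraph k).Adj a b))

/-!
Write `S(β, r)` for the square of `tripod β r` (three copies of the rooted tree `(β, r)` below a
new root) with that root deleted. The graph of the theorem is `S(H k)`, and `H (k + 1)` is a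
tripod of tripods of `H k`. By induction, every vertex ranking of `S(H k)` has a cut crossed by an
induced matching of size `2k + 1`: `S(H 0)` is a triangle, and passing from `S(β, r)` to
`S(tripod β r)` adds one.

For that step, each branch `i` of `S(tripod β r)` contains an induced copy of `S(β, r)`, whose
ranking has a good cut `t i`. Some `t i` also splits the vertices outside branch `i`; these span a
connected subgraph, so one of its edges crosses `t i`. Both ends of that edge are at distance more
than two from the interior of branch `i`, so it extends the matching of branch `i`.
-/

end LMW

namespace SimpleGraph

variable {W : Type*} {G : SimpleGraph W} {u v : W}

lemma edist_le_two_iff : G.edist u v ≤ 2 ↔ u = v ∨ G.Adj u v ∨ ∃ w, G.Adj u w ∧ G.Adj w v := by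
  rw [← not_lt, two_lt_edist_iff, Set.eq_empty_iff_forall_notMem]
  simp only [mem_commonNeighbors, not_and, not_forall, not_not, adj_comm _ v]
  tauto

lemma Adj.edist_le_two (h : G.Adj u v) : G.edist u v ≤ 2 :=
  edist_le_two_iff.mpr (.inr (.inl h))

lemma Reachable.exists_adj_lt_le (h : G.Reachable u v) {f : W → ℕ} {t : ℕ}
    (hu : f u < t) (hv : t ≤ f v) : ∃ x y, G.Adj x y ∧ f x < t ∧ t ≤ f y := by
  obtain ⟨p⟩ := h
  obtain ⟨d, -, hd₁, hd₂⟩ := p.exists_boundary_dart {x | f x < t} hu (by simpa using hv)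
  exact ⟨_, _, d.adj, hd₁, by simpa using hd₂⟩

lemma fromRel_eq_fromRel {r s : W → W → Prop}
    (hrs : ∀ x y, r x y → s x y ∨ s y x) (hsr : ∀ x y, s x y → r x y ∨ r y x) :
    fromRel r = fromRel s := by
  ext x y
  simp only [fromRel_adj]
  exact and_congr_right fun _ =>
    ⟨fun h => h.elim (hrs x y) fun h => (hrs y x h).symm,
      fun h => h.elim (hsr x y) fun h => (hsr y x h).symm⟩

end SimpleGraph

namespace LMW

open SimpleGraph

variable {W W' : Type*}

def crossingGraph (G : SimpleGraph W) (pos : W → ℕ) (t : ℕ) : SimpleGraph W where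
  Adj u v := G.Adj u v ∧ ((pos u < t ∧ t ≤ pos v) ∨ (pos v < t ∧ t ≤ pos u))
  symm := ⟨fun _ _ h => ⟨h.1.symm, h.2.symm⟩⟩
  loopless := ⟨fun u h => G.loopless.irrefl u h.1⟩

def Embedding.crossingGraph {G : SimpleGraph W} {G' : SimpleGraph W'} (f : G ↪g G')
    (pos : W' → ℕ) (t : ℕ) : crossingGraph G (pos ∘ f) t ↪g crossingGraph G' pos t where
  toEmbedding := f.toEmbedding
  map_rel_iff' := and_congr_left' f.map_adj_iff

section InducedMatching

variable {H : SimpleGraph W} {M : Finset (Sym2 W)}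

lemma isInducedMatching_singleton {u v : W} (h : H.Adj u v) : IsInducedMatching H {s(u, v)} :=
  ⟨by simpa using h, fun e he f hf hef => absurd ((Finset.mem_singleton.mp he).trans
    (Finset.mem_singleton.mp hf).symm) hef⟩

lemma IsInducedMatching.insert [DecidableEq W] (hM : IsInducedMatching H M) {u v : W}
    (h : H.Adj u v)
    (hsep : ∀ z ∈ s(u, v), ∀ e ∈ M, ∀ w ∈ e, z ≠ w ∧ ¬ H.Adj z w) :
    IsInducedMatching H (insert s(u, v) M) := by
  refine ⟨by simpa [Set.insert_subset_iff] using ⟨h, hM.1⟩, fun e he f hf hef z hz w hw => ?_⟩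
  rcases Finset.mem_insert.mp he with rfl | he <;> rcases Finset.mem_insert.mp hf with rfl | hf
  · exact absurd rfl hef
  · exact hsep z hz f hf w hw
  · exact (hsep w hw e he z hz).imp Ne.symm fun hn h => hn h.symm
  · exact hM.2 e he f hf hef z hz w hw

lemma IsInducedMatching.map [DecidableEq W'] {H' : SimpleGraph W'} (hM : IsInducedMatching H M)
    (f : H ↪g H') : IsInducedMatching H' (M.image (Sym2.map f)) := by
  refine ⟨?_, fun g hg g' hg' hne z hz w hw => ?_⟩
  · intro g hg
    obtain ⟨e, he, rfl⟩ := Finset.mem_image.mp (Finset.mem_coe.mp hg)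
    induction e using Sym2.ind with
    | _ a b => simpa using hM.1 (Finset.mem_coe.mpr he)
  · obtain ⟨e, he, rfl⟩ := Finset.mem_image.mp hg
    obtain ⟨e', he', rfl⟩ := Finset.mem_image.mp hg'
    obtain ⟨a, ha, rfl⟩ := Sym2.mem_map.mp hz
    obtain ⟨b, hb, rfl⟩ := Sym2.mem_map.mp hw
    obtain ⟨hab, hadj⟩ := hM.2 e he e' he' (fun h => hne (h ▸ rfl)) a ha b hb
    exact ⟨f.injective.ne hab, by simpa using hadj⟩

lemma IsInducedMatching.exists_crossing {G : SimpleGraph W} {pos : W → ℕ} {t : ℕ}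
    (hM : IsInducedMatching (crossingGraph G pos t) M) (hne : M.Nonempty) :
    ∃ u v, G.Adj u v ∧ pos u < t ∧ t ≤ pos v := by
  obtain ⟨e, he⟩ := hne
  induction e using Sym2.ind with
  | _ u v =>
    obtain ⟨huv, h | h⟩ := hM.1 (Finset.mem_coe.mpr he)
    exacts [⟨u, v, huv, h⟩, ⟨v, u, huv.symm, h⟩]

lemma IsInducedMatching.card_le_mim [Fintype W] (hM : IsInducedMatching H M) :
    M.card ≤ mim H :=
  le_csSup ⟨Fintype.card (Sym2 W), by rintro _ ⟨M', -, rfl⟩; exact M'.card_le_univ⟩ ⟨M, hM, rfl⟩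

end InducedMatching

/-- Rankings into `ℕ` rather than layouts, so that the property passes to induced subgraphs. -/
def HasWideCut (G : SimpleGraph W) (m : ℕ) : Prop :=
  ∀ pos : W → ℕ, pos.Injective →
    ∃ t M, IsInducedMatching (crossingGraph G pos t) M ∧ m ≤ M.card

lemma hasWideCut_one_of_adj {G : SimpleGraph W} {u v : W} (h : G.Adj u v) : HasWideCut G 1 := by
  intro pos hpos
  rcases (hpos.ne h.ne).lt_or_gt with huv | hvu
  · exact ⟨pos v, _, isInducedMatching_singleton (u := u) (v := v) ⟨h, .inl ⟨huv, le_rfl⟩⟩,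
      by simp⟩
  · exact ⟨pos u, _, isInducedMatching_singleton (u := u) (v := v) ⟨h, .inr ⟨hvu, le_rfl⟩⟩,
      by simp⟩

lemma HasWideCut.of_embedding {G : SimpleGraph W} {G' : SimpleGraph W'} {m : ℕ}
    (h : HasWideCut G m) (f : G ↪g G') : HasWideCut G' m := by
  intro pos hpos
  obtain ⟨t, M, hM, hm⟩ := h (pos ∘ f) (hpos.comp f.injective)
  exact ⟨t, _, hM.map (Embedding.crossingGraph f pos t),
    hm.trans (Finset.card_image_of_injective M (Sym2.map.injective f.injective)).ge⟩

lemma HasWideCut.le_lmw [Fintype W] {G : SimpleGraph W} {m : ℕ} (h : HasWideCut G m) :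
    m ≤ lmw G := by
  refine le_csInf ⟨_, Fintype.equivFin W, rfl⟩ ?_
  rintro _ ⟨σ, rfl⟩
  obtain ⟨t, M, hM, hm⟩ := h (fun v => σ v) (Fin.val_injective.comp σ.injective)
  rcases M.eq_empty_or_nonempty with rfl | hne
  · simp_all
  obtain ⟨u, v, -, hu, hv⟩ := hM.exists_crossing hne
  have ht : t ∈ Finset.Ico 1 (Fintype.card W) := Finset.mem_Ico.mpr ⟨by omega, by omega⟩
  exact hm.trans (hM.card_le_mim.trans (Finset.le_sup (f := fun i => mim (cutGraph G σ i)) ht))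

/-- If no cut `t i` split the copies other than `i`, each `t i` would be a strict maximum or a
strict minimum of the three values `t 0, t 1, t 2`. -/
lemma exists_cut_splitting_others {X : Type*} (pos : Fin 3 × X → ℕ) (t : Fin 3 → ℕ)
    (hlo : ∀ i, ∃ x, pos (i, x) < t i) (hhi : ∀ i, ∃ x, t i ≤ pos (i, x)) :
    ∃ i, (∃ x : Fin 3 × X, x.1 ≠ i ∧ pos x < t i) ∧ ∃ y : Fin 3 × X, y.1 ≠ i ∧ t i ≤ pos y := by
  by_contra! hsplit
  choose lo hlo using hlo
  choose up hup using hhi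
  have hext : ∀ i j k, j ≠ i → k ≠ i →
      (t i < t j ∧ t i < t k) ∨ (t j < t i ∧ t k < t i) := by
    intro i j k hj hk
    by_cases hbelow : ∃ x : Fin 3 × X, x.1 ≠ i ∧ pos x < t i
    · have := hsplit i hbelow (j, up j) hj
      have := hsplit i hbelow (k, up k) hk
      have := hup j
      have := hup k
      omega
    · push Not at hbelow
      have := hbelow (j, lo j) hj
      have := hbelow (k, lo k) hk
      have := hlo j
      have := hlo k
      omega
  have := hext 0 1 2 (by decide) (by decide)
  have := hext 1 0 2 (by decide) (by decide)
  have := hext 2 0 1 (by decide) (by decide)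
  omega

section Tripod

variable {B : Type*} {β : SimpleGraph B} {r : B}

def tripod (β : SimpleGraph B) (r : B) : SimpleGraph (Unit ⊕ Fin 3 × B) :=
  SimpleGraph.fromRel (fun x y =>
    (∃ i : Fin 3, x = Sum.inl () ∧ y = Sum.inr (i, r)) ∨
    (∃ (i : Fin 3) (a b : B), x = Sum.inr (i, a) ∧ y = Sum.inr (i, b) ∧ β.Adj a b))

lemma TvGraph_eq_tripod (k : ℕ) : TvGraph k = tripod (Hgraph k) (Hroot k) := rfl

@[simp]
lemma tripod_adj_inl_inr {j : Fin 3} {a : B} :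
    (tripod β r).Adj (Sum.inl ()) (Sum.inr (j, a)) ↔ a = r := by
  simp [tripod, eq_comm]

@[simp]
lemma tripod_adj_inr_inl {j : Fin 3} {a : B} :
    (tripod β r).Adj (Sum.inr (j, a)) (Sum.inl ()) ↔ a = r := by
  rw [adj_comm, tripod_adj_inl_inr]

@[simp]
lemma tripod_adj_inr_inr {j j' : Fin 3} {a a' : B} :
    (tripod β r).Adj (Sum.inr (j, a)) (Sum.inr (j', a')) ↔ j = j' ∧ β.Adj a a' := by
  simp only [tripod, fromRel_adj]
  aesop (add safe apply Adj.symm)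

def tripodBranch (β : SimpleGraph B) (r : B) (j : Fin 3) : β →g tripod β r where
  toFun a := Sum.inr (j, a)
  map_rel' := by simp

lemma tripod_connected (h : β.Connected) : (tripod β r).Connected := by
  have hroot : ∀ x, (tripod β r).Reachable x (Sum.inl ()) := by
    rintro (⟨⟩ | ⟨j, a⟩)
    · rfl
    · exact ((h.preconnected a r).map (tripodBranch β r j)).trans
        (Adj.reachable (by simp [tripodBranch]))
  exact (connected_iff _).mpr ⟨fun x y => (hroot x).trans (hroot y).symm, ⟨Sum.inl ()⟩⟩

lemma tripod_edist_inr_inr_le_two {j j' : Fin 3} {a a' : B} :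
    (tripod β r).edist (Sum.inr (j, a)) (Sum.inr (j', a')) ≤ 2 ↔
      (j = j' ∧ β.edist a a' ≤ 2) ∨ (a = r ∧ a' = r) := by
  simp only [edist_le_two_iff, Sum.exists, Prod.exists, Unique.exists_iff, PUnit.default_eq_unit,
    Sum.inr.injEq, Prod.mk.injEq, tripod_adj_inl_inr, tripod_adj_inr_inl, tripod_adj_inr_inr]
  aesop

end Tripod

section SqDelRoot

variable {B : Type*} {β : SimpleGraph B} {r : B}

def sqDelRoot (β : SimpleGraph B) (r : B) : SimpleGraph (Fin 3 × B) :=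
  (graphPow (tripod β r) 2).comap Sum.inr

def sqDelRootEmbedding (β : SimpleGraph B) (r : B) :
    sqDelRoot β r ↪g (graphPow (tripod β r) 2).induce {x | x ≠ Sum.inl ()} where
  toFun p := ⟨Sum.inr p, Sum.inr_ne_inl⟩
  inj' _ _ h := Sum.inr_injective (congrArg Subtype.val h)
  map_rel_iff' := Iff.rfl

lemma sqDelRoot_adj_iff_edist {x y : Fin 3 × B} :
    (sqDelRoot β r).Adj x y ↔ x ≠ y ∧ (tripod β r).edist (Sum.inr x) (Sum.inr y) ≤ 2 := by
  simp [sqDelRoot, graphPow]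

lemma sqDelRoot_adj {x y : Fin 3 × B} :
    (sqDelRoot β r).Adj x y ↔
      (x.1 = y.1 ∧ x.2 ≠ y.2 ∧ β.edist x.2 y.2 ≤ 2) ∨ (x.1 ≠ y.1 ∧ x.2 = r ∧ y.2 = r) := by
  obtain ⟨j, a⟩ := x
  obtain ⟨j', a'⟩ := y
  rw [sqDelRoot_adj_iff_edist, tripod_edist_inr_inr_le_two]
  by_cases hj : j = j' <;> aesop

end SqDelRoot

section Step

variable {B : Type*} {γ : SimpleGraph B} {ρ : B}

lemma sqDelRoot_adj_of_adj {a b : B} (h : γ.Adj a b) (i : Fin 3) :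
    (sqDelRoot γ ρ).Adj (i, a) (i, b) :=
  sqDelRoot_adj.mpr (.inl ⟨rfl, h.ne, h.edist_le_two⟩)

lemma sqDelRoot_adj_root_root {i j : Fin 3} (h : i ≠ j) : (sqDelRoot γ ρ).Adj (i, ρ) (j, ρ) :=
  sqDelRoot_adj.mpr (.inr ⟨h, rfl, rfl⟩)

lemma sqDelRoot_reachable_of_fst_ne (hγ : γ.Connected) {i : Fin 3} {x y : Fin 3 × B}
    (hx : x.1 ≠ i) (hy : y.1 ≠ i) :
    ((sqDelRoot γ ρ).induce {z : Fin 3 × B | z.1 ≠ i}).Reachable ⟨x, hx⟩ ⟨y, hy⟩ := by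
  let branch {c : Fin 3} (hc : c ≠ i) : γ →g (sqDelRoot γ ρ).induce {z : Fin 3 × B | z.1 ≠ i} :=
    { toFun a := ⟨(c, a), hc⟩
      map_rel' h := sqDelRoot_adj_of_adj h c }
  have hroot : ∀ (z : Fin 3 × B) (hz : z.1 ≠ i),
      ((sqDelRoot γ ρ).induce {z : Fin 3 × B | z.1 ≠ i}).Reachable ⟨z, hz⟩ ⟨(z.1, ρ), hz⟩ :=
    fun z hz => (hγ.preconnected z.2 ρ).map (branch hz)
  refine ((hroot x hx).trans ?_).trans (hroot y hy).symm
  by_cases hxy : x.1 = y.1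
  · simp [hxy]
  · exact Adj.reachable (sqDelRoot_adj_root_root hxy)

variable {β : SimpleGraph B} {r : B}

def branchEmbedding (β : SimpleGraph B) (r : B) (i : Fin 3) :
    sqDelRoot β r ↪g sqDelRoot (tripod β r) (Sum.inl ()) where
  toFun p := (i, Sum.inr p)
  inj' _ _ h := Sum.inr_injective (congrArg Prod.snd h)
  map_rel_iff' {p q} := by
    change (sqDelRoot _ _).Adj (i, Sum.inr p) (i, Sum.inr q) ↔ _
    simp [sqDelRoot_adj (β := tripod β r), sqDelRoot_adj_iff_edist]

lemma sqDelRoot_tripod_not_adj_of_fst_ne {i j : Fin 3} (hj : j ≠ i) (x : Unit ⊕ Fin 3 × B)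
    (p : Fin 3 × B) : ¬ (sqDelRoot (tripod β r) (Sum.inl ())).Adj (j, x) (i, Sum.inr p) := by
  simp [sqDelRoot_adj, hj]

lemma HasWideCut.sqDelRoot_tripod (hβ : β.Connected) {m : ℕ} (hm : 1 ≤ m)
    (h : HasWideCut (sqDelRoot β r) m) :
    HasWideCut (sqDelRoot (tripod β r) (Sum.inl ())) (m + 1) := by
  intro pos hpos
  set G := sqDelRoot (tripod β r) (Sum.inl ())
  choose t M hM hcard using fun i =>
    h (pos ∘ branchEmbedding β r i) (hpos.comp (branchEmbedding β r i).injective)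
  have hcross : ∀ i, ∃ p q : Fin 3 × B, pos (i, Sum.inr p) < t i ∧ t i ≤ pos (i, Sum.inr q) :=
    fun i => by
      obtain ⟨p, q, -, hp, hq⟩ := (hM i).exists_crossing (Finset.card_pos.mp (hm.trans (hcard i)))
      exact ⟨p, q, hp, hq⟩
  obtain ⟨i, ⟨x, hxi, hx⟩, y, hyi, hy⟩ := exists_cut_splitting_others pos t
    (fun i => let ⟨p, _, hp, _⟩ := hcross i; ⟨_, hp⟩)
    (fun i => let ⟨_, q, _, hq⟩ := hcross i; ⟨_, hq⟩)
  obtain ⟨⟨u, hu⟩, ⟨v, hv⟩, huv, hut, htv⟩ :=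
    (sqDelRoot_reachable_of_fst_ne (tripod_connected hβ) hxi hyi).exists_adj_lt_le
      (f := fun z => pos z.1) hx hy
  let f := Embedding.crossingGraph (branchEmbedding β r i) pos (t i)
  have hsep : ∀ z ∈ s(u, v), ∀ e ∈ (M i).image (Sym2.map f), ∀ w ∈ e,
      z ≠ w ∧ ¬ (crossingGraph G pos (t i)).Adj z w := by
    intro z hz e he w hw
    obtain ⟨e, -, rfl⟩ := Finset.mem_image.mp he
    obtain ⟨p, -, rfl⟩ := Sym2.mem_map.mp hw
    have hzi : z.1 ≠ i := by rcases Sym2.mem_iff.mp hz with rfl | rfl <;> assumption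
    exact ⟨fun h => hzi (congrArg Prod.fst h),
      fun h => sqDelRoot_tripod_not_adj_of_fst_ne hzi z.2 p h.1⟩
  have hnew : s(u, v) ∉ (M i).image (Sym2.map f) := fun hmem =>
    (hsep u (Sym2.mem_mk_left u v) _ hmem u (Sym2.mem_mk_left u v)).1 rfl
  refine ⟨t i, insert s(u, v) ((M i).image (Sym2.map f)),
    ((hM i).map f).insert ⟨huv, .inl ⟨hut, htv⟩⟩ hsep, ?_⟩
  rw [Finset.card_insert_of_notMem hnew,
    Finset.card_image_of_injective _ (Sym2.map.injective f.injective)]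
  exact Nat.add_le_add_right (hcard i) 1

end Step

lemma Hgraph_succ (k : ℕ) :
    Hgraph (k + 1) = tripod (tripod (Hgraph k) (Hroot k)) (Sum.inl ()) := by
  refine fromRel_eq_fromRel ?_ ?_
  · rintro x y (⟨i, rfl, rfl⟩ | ⟨i, j, rfl, rfl⟩ | ⟨i, j, a, b, rfl, rfl, h⟩)
    · exact .inl (.inl ⟨i, rfl, rfl⟩)
    · exact .inl (.inr ⟨i, _, _, rfl, rfl, tripod_adj_inl_inr.mpr rfl⟩)
    · exact .inl (.inr ⟨i, _, _, rfl, rfl, tripod_adj_inr_inr.mpr ⟨rfl, h⟩⟩)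
  · rintro x y (⟨i, rfl, rfl⟩ | ⟨i, ⟨⟩ | ⟨j, a⟩, ⟨⟩ | ⟨j', b⟩, rfl, rfl, h⟩)
    · exact .inl (.inl ⟨i, rfl, rfl⟩)
    · exact (h.ne rfl).elim
    · obtain rfl := tripod_adj_inl_inr.mp h
      exact .inl (.inr (.inl ⟨i, j', rfl, rfl⟩))
    · obtain rfl := tripod_adj_inr_inl.mp h
      exact .inr (.inr (.inl ⟨i, j, rfl, rfl⟩))
    · obtain ⟨rfl, hab⟩ := tripod_adj_inr_inr.mp h
      exact .inl (.inr (.inr ⟨i, j, a, b, rfl, rfl, hab⟩))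

lemma Hgraph_connected (k : ℕ) : (Hgraph k).Connected := by
  induction k with
  | zero => exact (connected_iff _).mpr ⟨fun _ _ => .rfl, ⟨Hroot 0⟩⟩
  | succ k ih =>
    rw [Hgraph_succ]
    exact tripod_connected (tripod_connected ih)

lemma hasWideCut_Hgraph (k : ℕ) : HasWideCut (sqDelRoot (Hgraph k) (Hroot k)) (2 * k + 1) := by
  induction k with
  | zero => exact hasWideCut_one_of_adj (sqDelRoot_adj_root_root (i := 0) (j := 1) (by decide))
  | succ k ih =>
    rw [Hgraph_succ]
    exact (ih.sqDelRoot_tripod (Hgraph_connected k) (by omega)).sqDelRoot_tripod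
      (tripod_connected (Hgraph_connected k)) (by omega)

/-- For every `k ≥ 0`, deleting the root `v` from the square of the tree `T_v` (whose root
`v` has three children, each the root of a copy of `H k`) leaves a graph of linear MIM-width
at least `2k + 1`. -/
theorem lmw_TvGraph_square_del_root (k : ℕ) :
    2 * k + 1 ≤ lmw ((graphPow (TvGraph k) 2).induce {x | x ≠ Sum.inl ()}) := by
  rw [TvGraph_eq_tripod]
  exact ((hasWideCut_Hgraph k).of_embedding (sqDelRootEmbedding _ _)).le_lmw

end LMW
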